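/- arXiv:1911.04260 — 5 statements merged into one kernel-verified Lean document; each statement's English description precedes it below -/
import Mathlib

section
/- Let Γ be a finite-dimensional n-Gorenstein algebra (every injective Γ-module has projective dimension at most n, and every projective Γ-module has injective dimension at most n). Then every finitely generated Γ-module of finite projective dimension has projective dimension at most n. -/
/-- `M` has projective dimension at most `m` over `R`. -/
def ProjDimLE (R : Type) [Ring R] : ℕ → (M : Type) → [AddCommGroup M] → [Module R M] → Prop
  | 0, M, _, _ => Module.Projective R M
  | (m+1), M, _, _ => ∃ (P : Type) (_ : AddCommGroup P) (_ : Module R P)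
      (f : P →ₗ[R] M), Module.Projective R P ∧ Function.Surjective f ∧
      ProjDimLE R m (LinearMap.ker f)

/-- `M` has injective dimension at most `m` over `R`. -/
def InjDimLE (R : Type) [Ring R] : ℕ → (M : Type) → [AddCommGroup M] → [Module R M] → Prop
  | 0, M, _, _ => Module.Injective R M
  | (m+1), M, _, _ => ∃ (I : Type) (_ : AddCommGroup I) (_ : Module R I)
      (f : M →ₗ[R] I), Module.Injective R I ∧ Function.Injective f ∧
      InjDimLE R m (I ⧸ LinearMap.range f)

/-- A chain of length `n+1` of embeddings into projectives, starting at `A ↪ B` and with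
successive cokernels, ending with top cokernel isomorphic to `M`. -/
def GChain (R : Type) [Ring R] : ℕ → (A : Type) → [AddCommGroup A] → [Module R A] →
    (B : Type) → [AddCommGroup B] → [Module R B] → (A →ₗ[R] B) →
    (M : Type) → [AddCommGroup M] → [Module R M] → Prop
  | 0, A, _, _, B, _, _, ι, M, _, _ =>
      Module.Projective R B ∧ Function.Injective ι ∧
        Nonempty ((B ⧸ LinearMap.range ι) ≃ₗ[R] M)
  | (n+1), A, _, _, B, _, _, ι, M, _, _ =>
      Module.Projective R B ∧ Function.Injective ι ∧
        ∃ (B' : Type) (_ : AddCommGroup B') (_ : Module R B')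
          (ι' : (B ⧸ LinearMap.range ι) →ₗ[R] B'),
          GChain R n (B ⧸ LinearMap.range ι) B' ι' M

section Aux

variable (R : Type) [Ring R]

theorem projOfSubsingleton (M : Type) [AddCommGroup M] [Module R M] [Subsingleton M] :
    Module.Projective R M :=
  Module.Projective.of_split (M := R) 0 0 (LinearMap.ext fun x => Subsingleton.elim _ _)

theorem gchain_head {n : ℕ} {A : Type} [AddCommGroup A] [Module R A]
    {B : Type} [AddCommGroup B] [Module R B] {ι : A →ₗ[R] B}
    {M : Type} [AddCommGroup M] [Module R M] (h : GChain R n A B ι M) :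
    Module.Projective R B ∧ Function.Injective ι := by
  cases n with
  | zero => exact ⟨h.1, h.2.1⟩
  | succ n => exact ⟨h.1, h.2.1⟩

theorem projdim_succ_of : ∀ (m : ℕ) (M : Type) [AddCommGroup M] [Module R M],
    ProjDimLE R m M → ProjDimLE R (m+1) M := by
  intro m
  induction m with
  | zero =>
    intro M _ _ h
    refine ⟨M, inferInstance, inferInstance, LinearMap.id, h, Function.surjective_id, ?_⟩
    haveI : Subsingleton (LinearMap.ker (LinearMap.id : M →ₗ[R] M)) := by
      rw [LinearMap.ker_id]
      infer_instance
    exact projOfSubsingleton R _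
  | succ m ih =>
    intro M _ _ h
    obtain ⟨P, _, _, f, hP, hs, hk⟩ := h
    exact ⟨P, _, _, f, hP, hs, ih _ hk⟩

theorem projdim_mono : ∀ (m m' : ℕ), m ≤ m' → ∀ (M : Type) [AddCommGroup M] [Module R M],
    ProjDimLE R m M → ProjDimLE R m' M := by
  intro m m' h
  induction h with
  | refl => intro M _ _ h; exact h
  | step _ ih =>
    intro M _ _ h
    exact projdim_succ_of R _ M (ih M h)

/-- Extend a chain at the top. -/
theorem gchain_ext_top : ∀ (n : ℕ) (A : Type) [AddCommGroup A] [Module R A]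
    (B : Type) [AddCommGroup B] [Module R B] (ι : A →ₗ[R] B)
    (K : Type) [AddCommGroup K] [Module R K], GChain R n A B ι K →
    ∀ (P : Type) [AddCommGroup P] [Module R P] (j : K →ₗ[R] P),
      Function.Injective j → Module.Projective R P →
    ∀ (M : Type) [AddCommGroup M] [Module R M],
      ((P ⧸ LinearMap.range j) ≃ₗ[R] M) → GChain R (n+1) A B ι M := by
  intro n
  induction n with
  | zero =>
    intro A _ _ B _ _ ι K _ _ hc P _ _ j hj hP M _ _ e
    obtain ⟨hB, hι, ⟨eK⟩⟩ := hc
    refine ⟨hB, hι, P, inferInstance, inferInstance, j ∘ₗ eK.toLinearMap, ?_, ?_, ⟨?_⟩⟩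
    · exact hP
    · exact hj.comp eK.injective
    · have hr : LinearMap.range (j ∘ₗ (eK : (B ⧸ LinearMap.range ι) →ₗ[R] K)) =
          LinearMap.range j := by
        rw [LinearMap.range_comp, LinearEquiv.range, Submodule.map_top]
      exact (Submodule.quotEquivOfEq _ _ hr).trans e
  | succ n ih =>
    intro A _ _ B _ _ ι K _ _ hc P _ _ j hj hP M _ _ e
    obtain ⟨hB, hι, B', _, _, ι', hc'⟩ := hc
    exact ⟨hB, hι, B', inferInstance, inferInstance, ι',
      ih _ B' ι' K hc' P j hj hP M e⟩

/-- The key extension lemma (`Ext` vanishing by dimension shifting):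
if `N` has injective dimension at most `n` and there is a chain of length `n+1`
above `ι : A → B`, then every map `A → N` extends to `B`. -/
theorem ext_lemma : ∀ (n : ℕ) (N : Type) [AddCommGroup N] [Module R N], InjDimLE R n N →
    ∀ (A : Type) [AddCommGroup A] [Module R A] (B : Type) [AddCommGroup B] [Module R B]
      (ι : A →ₗ[R] B) (M : Type) [AddCommGroup M] [Module R M],
      GChain R n A B ι M → ∀ φ : A →ₗ[R] N, ∃ g : B →ₗ[R] N, g ∘ₗ ι = φ := by
  intro n
  induction n with
  | zero =>
    intro N _ _ hN A _ _ B _ _ ι M _ _ hc φ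
    obtain ⟨hB, hι, -⟩ := hc
    obtain ⟨g, hg⟩ := hN.out ι hι φ
    exact ⟨g, LinearMap.ext hg⟩
  | succ n ih =>
    intro N _ _ hN A _ _ B _ _ ι M _ _ hc φ
    obtain ⟨I, _, _, e, hI, he, hC⟩ := hN
    obtain ⟨hB, hι, B', _, _, ι', hc'⟩ := hc
    -- Step 1: extend `e ∘ φ` along `ι` using injectivity of `I`.
    obtain ⟨g, hg⟩ := hI.out ι hι (e ∘ₗ φ)
    -- Step 2: `π ∘ g` kills the range of `ι`, giving `h : B ⧸ range ι → C`.
    set π := (LinearMap.range e).mkQ with hπ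
    have hle : LinearMap.range ι ≤ LinearMap.ker (π ∘ₗ g) := by
      rintro _ ⟨a, rfl⟩
      simp only [LinearMap.mem_ker, LinearMap.comp_apply, hg a]
      simp [π]
    set h : (B ⧸ LinearMap.range ι) →ₗ[R] (I ⧸ LinearMap.range e) :=
      Submodule.liftQ _ (π ∘ₗ g) hle with hh
    -- Step 3: extend `h` along `ι'` by induction.
    obtain ⟨H, hH⟩ := ih (I ⧸ LinearMap.range e) hC (B ⧸ LinearMap.range ι) B' ι' M hc' h
    -- Step 4: lift `H` through `π` using projectivity of `B'`.
    haveI := (gchain_head R hc').1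
    obtain ⟨H', hH'⟩ := Module.projective_lifting_property π H
      (Submodule.mkQ_surjective _)
    -- Step 5: the difference lands in the range of `e`.
    set G : B →ₗ[R] I := g - (H' ∘ₗ ι' ∘ₗ (LinearMap.range ι).mkQ) with hG
    have hGmem : ∀ b, G b ∈ LinearMap.range e := by
      intro b
      rw [← Submodule.ker_mkQ (LinearMap.range e), LinearMap.mem_ker]
      have h1 : π (H' (ι' (Submodule.Quotient.mk b))) = h (Submodule.Quotient.mk b) := by
        rw [← LinearMap.congr_fun hH (Submodule.Quotient.mk b)]
        exact LinearMap.congr_fun hH' _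
      have h2 : h (Submodule.Quotient.mk b) = π (g b) := by
        simp [hh]
      show π (G b) = 0
      rw [hG]
      simp only [LinearMap.sub_apply, map_sub, LinearMap.comp_apply, Submodule.mkQ_apply]
      rw [h1, h2, sub_self]
    set G' : B →ₗ[R] N :=
      ((LinearEquiv.ofInjective e he).symm : (LinearMap.range e) →ₗ[R] N) ∘ₗ
        (G.codRestrict (LinearMap.range e) hGmem) with hG'
    refine ⟨G', LinearMap.ext fun a => ?_⟩
    have key : ∀ x : LinearMap.range e, e ((LinearEquiv.ofInjective e he).symm x) = x := by
      intro x
      rw [← LinearEquiv.ofInjective_apply e (h := he), LinearEquiv.apply_symm_apply]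
    apply he
    have hmk0 : (LinearMap.range ι).mkQ (ι a) = 0 := by
      rw [Submodule.mkQ_apply]
      exact (Submodule.Quotient.mk_eq_zero _).2 ⟨a, rfl⟩
    have hGa : G (ι a) = e (φ a) := by
      rw [hG]
      simp only [LinearMap.sub_apply, LinearMap.comp_apply, hmk0, map_zero, sub_zero, hg a]
    calc e (G' (ι a)) = ((G.codRestrict (LinearMap.range e) hGmem) (ι a) : I) := by
            rw [hG']; exact key _
      _ = G (ι a) := rfl
      _ = e (φ a) := hGa

/-- From `ProjDimLE (n+1) M` extract the deepest syzygy together with its chain,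
and a way to reassemble. -/
theorem projdim_chain : ∀ (n : ℕ) (M : Type) [AddCommGroup M] [Module R M],
    ProjDimLE R (n+1) M →
    ∃ (A : Type) (_ : AddCommGroup A) (_ : Module R A)
      (B : Type) (_ : AddCommGroup B) (_ : Module R B) (ι : A →ₗ[R] B),
      Module.Projective R A ∧ GChain R n A B ι M ∧
      ((∃ r : B →ₗ[R] A, r ∘ₗ ι = LinearMap.id) → ProjDimLE R n M) := by
  intro n
  induction n with
  | zero =>
    intro M _ _ h
    obtain ⟨P, _, _, f, hP, hs, hk⟩ := h
    haveI := hP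
    refine ⟨LinearMap.ker f, inferInstance, inferInstance, P, inferInstance, inferInstance,
      (LinearMap.ker f).subtype, hk, ⟨hP, Submodule.injective_subtype _, ⟨?_⟩⟩, ?_⟩
    · exact (Submodule.quotEquivOfEq _ _ (Submodule.range_subtype _)).trans
        (f.quotKerEquivOfSurjective hs)
    · rintro ⟨r, hr⟩
      -- build a section of `f`, showing `M` projective
      set ι := (LinearMap.ker f).subtype with hiota
      set q : P →ₗ[R] P := LinearMap.id - ι ∘ₗ r with hq
      have hker : LinearMap.ker f ≤ LinearMap.ker q := by
        intro x hx
        have hrx : r x = ⟨x, hx⟩ := by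
          have := LinearMap.congr_fun hr (⟨x, hx⟩ : LinearMap.ker f)
          simpa [hiota] using this
        rw [LinearMap.mem_ker, hq]
        simp [hrx, hiota]
      set e := f.quotKerEquivOfSurjective hs with hedef
      set s : M →ₗ[R] P :=
        (Submodule.liftQ _ q hker) ∘ₗ (e.symm : M →ₗ[R] (P ⧸ LinearMap.ker f)) with hsdef
      have hfs : f ∘ₗ s = LinearMap.id := by
        apply LinearMap.ext
        intro m
        obtain ⟨p, rfl⟩ := hs m
        have he1 : e (Submodule.Quotient.mk p) = f p := rfl
        have he2 : e.symm (f p) = Submodule.Quotient.mk p := by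
          rw [← he1, LinearEquiv.symm_apply_apply]
        have h3 : s (f p) = q p := by
          rw [hsdef]
          simp only [LinearMap.comp_apply, LinearEquiv.coe_coe, he2]
          exact Submodule.liftQ_apply _ _ _
        have h4 : f (ι (r p)) = 0 := (r p).2
        simp only [LinearMap.comp_apply, LinearMap.id_apply, h3, hq]
        simp [h4]
      exact Module.Projective.of_split s f hfs
  | succ n ih =>
    intro M _ _ h
    obtain ⟨P, _, _, f, hP, hs, hk⟩ := h
    obtain ⟨A, _, _, B, _, _, ι, hA, hchain, reasm⟩ := ih (LinearMap.ker f) hk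
    refine ⟨A, inferInstance, inferInstance, B, inferInstance, inferInstance, ι, hA, ?_, ?_⟩
    · refine gchain_ext_top R n A B ι (LinearMap.ker f) hchain P
        (LinearMap.ker f).subtype (Submodule.injective_subtype _) hP M ?_
      exact (Submodule.quotEquivOfEq _ _ (Submodule.range_subtype _)).trans
        (f.quotKerEquivOfSurjective hs)
    · intro hsplit
      exact ⟨P, inferInstance, inferInstance, f, hP, hs, reasm hsplit⟩

end Aux

/-- Let Γ be a finite-dimensional n-Gorenstein algebra (every injective Γ-module has
projective dimension at most n, and every projective Γ-module has injective dimension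
at most n). Then every finitely generated Γ-module of finite projective dimension has
projective dimension at most n. -/
theorem stmt_0 (k : Type) [Field k] (Γ : Type) [Ring Γ] [Algebra k Γ]
    [FiniteDimensional k Γ] (n : ℕ)
    (hGor₁ : ∀ (N : Type) [AddCommGroup N] [Module Γ N],
      Module.Injective Γ N → ProjDimLE Γ n N)
    (hGor₂ : ∀ (N : Type) [AddCommGroup N] [Module Γ N],
      Module.Projective Γ N → InjDimLE Γ n N)
    (M : Type) [AddCommGroup M] [Module Γ M] [Module.Finite Γ M]
    (hfin : ∃ m : ℕ, ProjDimLE Γ m M) :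
    ProjDimLE Γ n M := by
  have down : ∀ (M' : Type) [AddCommGroup M'] [Module Γ M'],
      ProjDimLE Γ (n+1) M' → ProjDimLE Γ n M' := by
    intro M' _ _ h
    obtain ⟨A, _, _, B, _, _, ι, hA, hchain, reasm⟩ := projdim_chain Γ n M' h
    exact reasm (ext_lemma Γ n A (hGor₂ A hA) A B ι M' hchain LinearMap.id)
  have main : ∀ (m : ℕ) (M' : Type) [AddCommGroup M'] [Module Γ M'],
      ProjDimLE Γ m M' → ProjDimLE Γ n M' := by
    intro m
    induction m with
    | zero =>
      intro M' _ _ h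
      exact projdim_mono Γ 0 n (Nat.zero_le n) M' h
    | succ m ih =>
      intro M' _ _ h
      obtain ⟨P, _, _, f, hP, hs, hk⟩ := h
      exact down M' ⟨P, inferInstance, inferInstance, f, hP, hs, ih _ hk⟩
  obtain ⟨m, hm⟩ := hfin
  exact main m M hm
end

section
/- Let Γ be a finite-dimensional n-Gorenstein algebra. Then every finitely generated Γ-module of finite injective dimension has injective dimension at most n. -/
/-- `Q` is an `s`-th cosyzygy: there is an exact sequence `0 → Q' → J₁ → ⋯ → Jₛ → Q → 0`
with every `Jᵢ` injective. -/
def IsCosyzygy (R : Type) [Ring R] : ℕ → (Q : Type) → [AddCommGroup Q] → [Module R Q] → Prop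
  | 0, _, _, _ => True
  | (s+1), Q, _, _ => ∃ (J : Type) (_ : AddCommGroup J) (_ : Module R J)
      (π : J →ₗ[R] Q), Module.Injective R J ∧ Function.Surjective π ∧
      IsCosyzygy R s (LinearMap.ker π)

section

variable {R : Type} [Ring R]

theorem LinearMap.exists_comp_eq_of_ker_le {P X Y : Type} [AddCommGroup P] [Module R P]
    [AddCommGroup X] [Module R X] [AddCommGroup Y] [Module R Y] {q : P →ₗ[R] X}
    (hq : Function.Surjective q) {g : P →ₗ[R] Y} (hqg : LinearMap.ker q ≤ LinearMap.ker g) :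
    ∃ h : X →ₗ[R] Y, h ∘ₗ q = g :=
  ⟨(LinearMap.ker q).liftQ g hqg ∘ₗ (q.quotKerEquivOfSurjective hq).symm.toLinearMap, by
    ext x
    have hx : (q.quotKerEquivOfSurjective hq).symm (q x) = Submodule.Quotient.mk x :=
      (LinearEquiv.symm_apply_eq _).2 rfl
    simp [hx]⟩

theorem Module.Injective.of_subsingleton (M : Type) [AddCommGroup M] [Module R M]
    [Subsingleton M] : Module.Injective R M :=
  ⟨fun _ _ _ _ _ _ _ _ _ => ⟨0, fun _ => Subsingleton.elim _ _⟩⟩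

theorem Module.Injective.of_retract {M I : Type} [AddCommGroup M] [Module R M]
    [AddCommGroup I] [Module R I] [Module.Injective R I] {ι : M →ₗ[R] I} {r : I →ₗ[R] M}
    (hri : r ∘ₗ ι = LinearMap.id) : Module.Injective R M := by
  refine ⟨fun X Y _ _ _ _ f hf g => ?_⟩
  obtain ⟨h, hh⟩ := Module.Injective.out f hf (ι ∘ₗ g)
  exact ⟨r ∘ₗ h, fun x => by simpa [hh] using LinearMap.congr_fun hri (g x)⟩

theorem InjDimLE.of_injective : ∀ {m : ℕ} {M : Type} [AddCommGroup M] [Module R M]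
    [Module.Injective R M], InjDimLE R m M
  | 0, _, _, _, h => h
  | _ + 1, M, _, _, h => ⟨M, _, _, LinearMap.id, h, Function.injective_id, by
      have := Submodule.Quotient.subsingleton_iff.2 (LinearMap.range_id (R := R) (M := M))
      have := Module.Injective.of_subsingleton (R := R)
        (M ⧸ LinearMap.range (LinearMap.id : M →ₗ[R] M))
      exact InjDimLE.of_injective⟩

theorem InjDimLE.succ : ∀ {m : ℕ} {M : Type} [AddCommGroup M] [Module R M],
    InjDimLE R m M → InjDimLE R (m + 1) M
  | 0, _, _, _, h => have : Module.Injective R _ := h; InjDimLE.of_injective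
  | _ + 1, _, _, _, ⟨I, _, _, f, hI, hf, hC⟩ => ⟨I, _, _, f, hI, hf, hC.succ⟩

theorem InjDimLE.mono {m m' : ℕ} (hmm' : m ≤ m') {M : Type} [AddCommGroup M] [Module R M]
    (h : InjDimLE R m M) : InjDimLE R m' M := by
  induction m', hmm' using Nat.le_induction with
  | base => exact h
  | succ _ _ ih => exact ih.succ

theorem IsCosyzygy.of_linearEquiv : ∀ {s : ℕ} {Q Q' : Type} [AddCommGroup Q] [Module R Q]
    [AddCommGroup Q'] [Module R Q'], (Q ≃ₗ[R] Q') → IsCosyzygy R s Q → IsCosyzygy R s Q'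
  | 0, _, _, _, _, _, _, _, _ => trivial
  | _ + 1, _, _, _, _, _, _, e, ⟨J, _, _, π, hJ, hπ, hK⟩ =>
    ⟨J, _, _, e.toLinearMap ∘ₗ π, hJ, e.surjective.comp hπ, by
      rwa [LinearMap.ker_comp, LinearEquiv.ker, Submodule.comap_bot]⟩

theorem IsCosyzygy.of_succ : ∀ {s : ℕ} {Q : Type} [AddCommGroup Q] [Module R Q],
    IsCosyzygy R (s + 1) Q → IsCosyzygy R s Q
  | 0, _, _, _, _ => trivial
  | _ + 1, _, _, _, ⟨J, _, _, π, hJ, hπ, hK⟩ => ⟨J, _, _, π, hJ, hπ, hK.of_succ⟩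

theorem IsCosyzygy.mono {s s' : ℕ} (hss' : s ≤ s') {Q : Type} [AddCommGroup Q] [Module R Q]
    (h : IsCosyzygy R s' Q) : IsCosyzygy R s Q := by
  induction s', hss' using Nat.le_induction with
  | base => exact h
  | succ _ _ ih => exact ih h.of_succ

/-- Dimension shifting on both sides: `Ext¹(X, ker p) ≅ Ext^{j+1}(X, Q') = 0` when
`pd X ≤ j` and `ker p` is a `j`-th cosyzygy of `Q'`. -/
theorem exists_lift_of_projDimLE_of_isCosyzygy : ∀ (j : ℕ) {X Y Z : Type}
    [AddCommGroup X] [Module R X] [AddCommGroup Y] [Module R Y] [AddCommGroup Z] [Module R Z]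
    {p : Y →ₗ[R] Z}, Function.Surjective p → IsCosyzygy R j (LinearMap.ker p) →
    ProjDimLE R j X → ∀ g : X →ₗ[R] Z, ∃ h : X →ₗ[R] Y, p ∘ₗ h = g
  | 0, _, _, _, _, _, _, _, _, _, p, hp, _, hX, g => by
    have : Module.Projective R _ := hX
    exact Module.projective_lifting_property p g hp
  | j + 1, X, Y, Z, _, _, _, _, _, _, p, hp, ⟨J, _, _, π, hJ, hπ, hπK⟩, ⟨P, _, _, q, hP, hq, hqK⟩,
    g => by
    obtain ⟨ψ, hψ⟩ := Module.projective_lifting_property p (g ∘ₗ q) hp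
    have hψK : ∀ k : LinearMap.ker q, ψ k ∈ LinearMap.ker p := fun k => by
      simpa [k.2] using LinearMap.congr_fun hψ k
    obtain ⟨l, hl⟩ := exists_lift_of_projDimLE_of_isCosyzygy j hπ hπK hqK
      (LinearMap.codRestrict _ (ψ ∘ₗ (LinearMap.ker q).subtype) hψK)
    obtain ⟨L, hL⟩ := Module.Injective.out (LinearMap.ker q).subtype Subtype.val_injective l
    set ψ' := ψ - (LinearMap.ker p).subtype ∘ₗ π ∘ₗ L
    have hψ' : p ∘ₗ ψ' = g ∘ₗ q := by
      ext x
      simp [ψ', ← LinearMap.congr_fun hψ x]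
    have hψ'K : LinearMap.ker q ≤ LinearMap.ker ψ' := fun k hk => by
      have hπl : (π (l ⟨k, hk⟩) : Y) = ψ k :=
        congrArg Subtype.val (LinearMap.congr_fun hl ⟨k, hk⟩)
      change ψ k - (π (L k) : Y) = 0
      rw [show L k = l ⟨k, hk⟩ from hL ⟨k, hk⟩, hπl, sub_self]
    obtain ⟨h, hh⟩ := LinearMap.exists_comp_eq_of_ker_le hq hψ'K
    refine ⟨h, (LinearMap.cancel_right hq).1 ?_⟩
    rw [LinearMap.comp_assoc, hh, hψ']

variable {n : ℕ}

theorem IsCosyzygy.ker_mkQ_range {t : ℕ} {M I : Type} [AddCommGroup M] [Module R M]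
    [AddCommGroup I] [Module R I] (hM : IsCosyzygy R t M) {f : M →ₗ[R] I}
    (hf : Function.Injective f) : IsCosyzygy R t (LinearMap.ker (LinearMap.range f).mkQ) := by
  rw [Submodule.ker_mkQ]
  exact hM.of_linearEquiv (LinearEquiv.ofInjective f hf)

theorem IsCosyzygy.quotient_range {t : ℕ} {M I : Type} [AddCommGroup M] [Module R M]
    [AddCommGroup I] [Module R I] [Module.Injective R I] (hM : IsCosyzygy R t M)
    {f : M →ₗ[R] I} (hf : Function.Injective f) : IsCosyzygy R (t + 1) (I ⧸ LinearMap.range f) :=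
  ⟨I, _, _, _, inferInstance, Submodule.mkQ_surjective _, hM.ker_mkQ_range hf⟩

/-- The embedding of `M` into `I` splits since `Ext¹(I/M, M) = 0`. -/
theorem Module.Injective.of_injDimLE_one_of_isCosyzygy
    (hpd : ∀ (N : Type) [AddCommGroup N] [Module R N], Module.Injective R N → ProjDimLE R n N)
    {M : Type} [AddCommGroup M] [Module R M] (hM : IsCosyzygy R n M) (h : InjDimLE R 1 M) :
    Module.Injective R M := by
  obtain ⟨I, _, _, f, hI, hf, hC⟩ := h
  obtain ⟨σ, hσ⟩ := exists_lift_of_projDimLE_of_isCosyzygy n (Submodule.mkQ_surjective _)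
    (hM.ker_mkQ_range hf) (hpd _ hC) LinearMap.id
  obtain ⟨r, hr⟩ := ((f.exact_map_mkQ_range.split_tfae hf (Submodule.mkQ_surjective _)).out 0 1).1
    (⟨σ, hσ⟩ : ∃ σ, (LinearMap.range f).mkQ ∘ₗ σ = LinearMap.id)
  exact .of_retract hr

theorem InjDimLE.of_succ_of_isCosyzygy
    (hpd : ∀ (N : Type) [AddCommGroup N] [Module R N], Module.Injective R N → ProjDimLE R n N) :
    ∀ {s t : ℕ}, n ≤ s + t → ∀ {M : Type} [AddCommGroup M] [Module R M],
    IsCosyzygy R t M → InjDimLE R (s + 1) M → InjDimLE R s M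
  | 0, _, _, _, _, _, hM, h =>
    Module.Injective.of_injDimLE_one_of_isCosyzygy hpd (hM.mono (by omega)) h
  | _ + 1, _, _, _, _, _, hM, ⟨I, _, _, f, hI, hf, hC⟩ =>
    ⟨I, _, _, f, hI, hf, InjDimLE.of_succ_of_isCosyzygy hpd (by omega)
      (hM.quotient_range hf) hC⟩

theorem InjDimLE.of_forall_injective_projDimLE
    (hpd : ∀ (N : Type) [AddCommGroup N] [Module R N], Module.Injective R N → ProjDimLE R n N) :
    ∀ {m : ℕ} {M : Type} [AddCommGroup M] [Module R M], InjDimLE R m M → InjDimLE R n M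
  | 0, _, _, _, h => have : Module.Injective R _ := h; .of_injective
  | m + 1, _, _, _, h =>
    if hm : m + 1 ≤ n then h.mono hm
    else InjDimLE.of_forall_injective_projDimLE hpd
      (InjDimLE.of_succ_of_isCosyzygy hpd (t := 0) (by omega) trivial h)

end

theorem stmt_1_general (Γ : Type) [Ring Γ] (n : ℕ)
    (hGor₁ : ∀ (N : Type) [AddCommGroup N] [Module Γ N],
      Module.Injective Γ N → ProjDimLE Γ n N)
    (M : Type) [AddCommGroup M] [Module Γ M]
    (hfin : ∃ m : ℕ, InjDimLE Γ m M) :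
    InjDimLE Γ n M := by
  obtain ⟨m, hm⟩ := hfin
  exact InjDimLE.of_forall_injective_projDimLE hGor₁ hm

/-- Let Γ be a finite-dimensional n-Gorenstein algebra. Then every finitely generated
Γ-module of finite injective dimension has injective dimension at most n. -/
theorem stmt_1 (k : Type) [Field k] (Γ : Type) [Ring Γ] [Algebra k Γ]
    [FiniteDimensional k Γ] (n : ℕ)
    (hGor₁ : ∀ (N : Type) [AddCommGroup N] [Module Γ N],
      Module.Injective Γ N → ProjDimLE Γ n N)
    (hGor₂ : ∀ (N : Type) [AddCommGroup N] [Module Γ N],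
      Module.Projective Γ N → InjDimLE Γ n N)
    (M : Type) [AddCommGroup M] [Module Γ M] [Module.Finite Γ M]
    (hfin : ∃ m : ℕ, InjDimLE Γ m M) :
    InjDimLE Γ n M :=
  stmt_1_general Γ n hGor₁ M hfin
end

section
/- Let Γ be a finite-dimensional n-Gorenstein algebra. Then every finitely generated Γ-module is either of infinite projective dimension or of projective dimension at most n. -/
section Gorenstein

variable (Γ : Type) [Ring Γ]

/-- `X` is (at least) a `j`-th syzygy: there is a chain of `j` projective covers above it. -/
def IsSyz : ℕ → (X : Type) → [AddCommGroup X] → [Module Γ X] → Prop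
  | 0, _, _, _ => True
  | (j+1), X, _, _ => ∃ (X' : Type) (_ : AddCommGroup X') (_ : Module Γ X')
      (P : Type) (_ : AddCommGroup P) (_ : Module Γ P) (p : P →ₗ[Γ] X'),
      Module.Projective Γ P ∧ Function.Surjective p ∧ IsSyz j X' ∧
      Nonempty (X ≃ₗ[Γ] LinearMap.ker p)

lemma quotKer_symm_apply {P X : Type} [AddCommGroup P] [Module Γ P] [AddCommGroup X] [Module Γ X]
    (p : P →ₗ[Γ] X) (hp : Function.Surjective p) (x : P) :
    (p.quotKerEquivOfSurjective hp).symm (p x) = Submodule.Quotient.mk x := by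
  have h : (p.quotKerEquivOfSurjective hp) (Submodule.Quotient.mk x) = p x := rfl
  rw [← h, LinearEquiv.symm_apply_apply]

/-- The key homological lemma (a form of `Ext¹(X, N) = 0` when `X` is a `j`-th syzygy and
`N` has injective dimension at most `j`): any map on a first syzygy of `X` extends to the
covering projective. -/
lemma ext_vanish : ∀ (j : ℕ), ∀ (X : Type) [AddCommGroup X] [Module Γ X], IsSyz Γ j X →
    ∀ (N : Type) [AddCommGroup N] [Module Γ N], InjDimLE Γ j N →
    ∀ (P : Type) [AddCommGroup P] [Module Γ P] (p : P →ₗ[Γ] X),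
      Module.Projective Γ P → Function.Surjective p →
    ∀ (g : (LinearMap.ker p : Submodule Γ P) →ₗ[Γ] N),
      ∃ h : P →ₗ[Γ] N, ∀ x : LinearMap.ker p, h x = g x := by
  intro j
  induction j with
  | zero =>
    intro X _ _ _ N _ _ hN P _ _ p _ hp g
    have hNI : Module.Injective Γ N := hN
    obtain ⟨h, hh⟩ := hNI.out (LinearMap.ker p).subtype (Submodule.injective_subtype _) g
    exact ⟨h, fun x => hh x⟩
  | succ j ih =>
    intro X _ _ hX N _ _ hN P _ _ p hP hp g
    obtain ⟨I, _, _, e, hI, he, hC⟩ := hN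
    obtain ⟨X', _, _, P', _, _, p', hP', hp', hX', ⟨φ⟩⟩ := hX
    obtain ⟨h, hh⟩ := hI.out (LinearMap.ker p).subtype (Submodule.injective_subtype _) (e ∘ₗ g)
    set π : I →ₗ[Γ] I ⧸ LinearMap.range e := (LinearMap.range e).mkQ with hπ
    have hker : LinearMap.ker p ≤ LinearMap.ker (π ∘ₗ h) := by
      intro x hx
      have hx' : h x = e (g ⟨x, hx⟩) := hh ⟨x, hx⟩
      simp only [LinearMap.mem_ker, LinearMap.comp_apply, hx', hπ, Submodule.mkQ_apply,
        Submodule.Quotient.mk_eq_zero]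
      exact ⟨_, rfl⟩
    set gbar : X →ₗ[Γ] I ⧸ LinearMap.range e :=
      (Submodule.liftQ (LinearMap.ker p) (π ∘ₗ h) hker) ∘ₗ
        (p.quotKerEquivOfSurjective hp).symm.toLinearMap with hgbardef
    have hgbar : ∀ x : P, gbar (p x) = π (h x) := by
      intro x
      simp only [hgbardef, LinearMap.comp_apply, LinearEquiv.coe_coe,
        quotKer_symm_apply Γ p hp x, Submodule.liftQ_apply]
    obtain ⟨H, hH⟩ := ih X' hX' _ hC P' p' hP' hp' (gbar ∘ₗ φ.symm.toLinearMap)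
    obtain ⟨T, hT⟩ := Module.projective_lifting_property π H (Submodule.mkQ_surjective _)
    set ψ : P →ₗ[Γ] I :=
      h - T ∘ₗ (LinearMap.ker p').subtype ∘ₗ φ.toLinearMap ∘ₗ p with hψdef
    have hψ : ∀ x, ψ x ∈ LinearMap.range e := by
      intro x
      have h1 : π (T ((LinearMap.ker p').subtype (φ (p x)))) = H (φ (p x)) := by
        rw [← LinearMap.comp_apply π T, hT]; rfl
      have h2 : H (φ (p x)) = gbar (p x) := by
        rw [hH (φ (p x))]
        simp only [LinearMap.comp_apply, LinearEquiv.coe_toLinearMap,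
          LinearEquiv.symm_apply_apply]
      have h0 : π (ψ x) = 0 := by
        have hx : ψ x = h x - T ((LinearMap.ker p').subtype (φ (p x))) := rfl
        rw [hx, map_sub, h1, h2, hgbar x, sub_self]
      have : ψ x ∈ LinearMap.ker π := h0
      rwa [hπ, Submodule.ker_mkQ] at this
    set eN : N ≃ₗ[Γ] LinearMap.range e := LinearEquiv.ofInjective e he with heN
    set ψ' : P →ₗ[Γ] N :=
      eN.symm.toLinearMap ∘ₗ (ψ.codRestrict (LinearMap.range e) hψ) with hψ'def
    have heψ' : ∀ y, e (ψ' y) = ψ y := by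
      intro y
      have h3 : eN (ψ' y) = ⟨ψ y, hψ y⟩ := by
        simp only [hψ'def, LinearMap.comp_apply, LinearEquiv.coe_toLinearMap,
          LinearEquiv.apply_symm_apply]
        exact Subtype.ext (LinearMap.codRestrict_apply _ _ y)
      have h4 : (eN (ψ' y) : I) = e (ψ' y) := by
        simp only [heN, LinearEquiv.ofInjective_apply]
      rw [← h4, h3]
    refine ⟨ψ', fun x => he ?_⟩
    rw [heψ' x]
    have hx0 : p (x : P) = 0 := x.2
    simp only [hψdef, LinearMap.sub_apply, LinearMap.comp_apply, hx0, map_zero, sub_zero]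
    exact hh x

/-- A module covered by a projective such that the kernel inclusion has a retraction
is projective. -/
lemma projective_of_retract {P X : Type} [AddCommGroup P] [Module Γ P]
    [AddCommGroup X] [Module Γ X]
    (p : P →ₗ[Γ] X) (hP : Module.Projective Γ P) (hp : Function.Surjective p)
    (r : P →ₗ[Γ] LinearMap.ker p) (hr : ∀ x : LinearMap.ker p, r (x : P) = x) :
    Module.Projective Γ X := by
  set s0 : P →ₗ[Γ] P := LinearMap.id - (LinearMap.ker p).subtype ∘ₗ r with hs0
  have hks : LinearMap.ker p ≤ LinearMap.ker s0 := by
    intro x hx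
    have : r x = ⟨x, hx⟩ := hr ⟨x, hx⟩
    simp only [LinearMap.mem_ker, hs0, LinearMap.sub_apply, LinearMap.id_apply,
      LinearMap.comp_apply, this, Submodule.coe_subtype, sub_self]
  set s : X →ₗ[Γ] P :=
    (Submodule.liftQ _ s0 hks) ∘ₗ (p.quotKerEquivOfSurjective hp).symm.toLinearMap with hs
  have hsx : ∀ x : P, s (p x) = s0 x := by
    intro x
    simp only [hs, LinearMap.comp_apply, LinearEquiv.coe_toLinearMap,
      quotKer_symm_apply Γ p hp x, Submodule.liftQ_apply]
  have hps : p ∘ₗ s = LinearMap.id := by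
    apply LinearMap.ext
    intro y
    obtain ⟨x, rfl⟩ := hp y
    have hrk : p ((r x : P)) = 0 := (r x).2
    rw [LinearMap.comp_apply, hsx x]
    simp only [hs0, LinearMap.sub_apply, LinearMap.id_apply, LinearMap.comp_apply,
      Submodule.coe_subtype, map_sub, hrk, sub_zero]
  exact Module.Projective.of_split s p hps

lemma isSyz_succ {j : ℕ} {X P : Type} [AddCommGroup X] [Module Γ X]
    [AddCommGroup P] [Module Γ P] (p : P →ₗ[Γ] X)
    (hP : Module.Projective Γ P) (hp : Function.Surjective p) (hX : IsSyz Γ j X) :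
    IsSyz Γ (j+1) (LinearMap.ker p) :=
  ⟨X, inferInstance, inferInstance, P, inferInstance, inferInstance, p, hP, hp, hX,
    ⟨LinearEquiv.refl Γ _⟩⟩

lemma step_down (n : ℕ)
    (hGor₂ : ∀ (N : Type) [AddCommGroup N] [Module Γ N],
      Module.Projective Γ N → InjDimLE Γ n N) :
    ∀ (i j : ℕ), i + j = n → ∀ (X : Type) [AddCommGroup X] [Module Γ X],
      IsSyz Γ j X → ProjDimLE Γ (i+1) X → ProjDimLE Γ i X := by
  intro i
  induction i with
  | zero =>
    intro j hij X _ _ hX hpd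
    obtain ⟨P, _, _, p, hP, hp, hker⟩ := hpd
    have hkerproj : Module.Projective Γ (LinearMap.ker p) := hker
    have hinj : InjDimLE Γ n (LinearMap.ker p) := hGor₂ _ hkerproj
    have hj : j = n := by omega
    subst hj
    obtain ⟨r, hr⟩ := ext_vanish Γ j X hX _ hinj P p hP hp LinearMap.id
    exact projective_of_retract Γ p hP hp r (fun x => hr x)
  | succ i ih =>
    intro j hij X _ _ hX hpd
    obtain ⟨P, _, _, p, hP, hp, hker⟩ := hpd
    have := ih (j+1) (by omega) (LinearMap.ker p) (isSyz_succ Γ p hP hp hX) hker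
    exact ⟨P, inferInstance, inferInstance, p, hP, hp, this⟩

lemma reduce_one (n : ℕ)
    (hGor₂ : ∀ (N : Type) [AddCommGroup N] [Module Γ N],
      Module.Projective Γ N → InjDimLE Γ n N) :
    ∀ (m : ℕ) (X : Type) [AddCommGroup X] [Module Γ X],
      ProjDimLE Γ (n+1+m) X → ProjDimLE Γ (n+m) X := by
  intro m
  induction m with
  | zero =>
    intro X _ _ h
    exact step_down Γ n hGor₂ n 0 (by omega) X trivial h
  | succ m ih =>
    intro X _ _ h
    obtain ⟨P, _, _, p, hP, hp, hker⟩ := h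
    exact ⟨P, inferInstance, inferInstance, p, hP, hp, ih _ hker⟩

lemma reduce_to (n : ℕ)
    (hGor₂ : ∀ (N : Type) [AddCommGroup N] [Module Γ N],
      Module.Projective Γ N → InjDimLE Γ n N) :
    ∀ (t : ℕ) (X : Type) [AddCommGroup X] [Module Γ X],
      ProjDimLE Γ (n+t) X → ProjDimLE Γ n X := by
  intro t
  induction t with
  | zero => intro X _ _ h; exact h
  | succ t ih =>
    intro X _ _ h
    have h' : ProjDimLE Γ (n+1+t) X := by rwa [show n+1+t = n+(t+1) by omega]
    exact ih X (reduce_one Γ n hGor₂ t X h')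

lemma projDimLE_succ : ∀ (m : ℕ) (X : Type) [AddCommGroup X] [Module Γ X],
    ProjDimLE Γ m X → ProjDimLE Γ (m+1) X := by
  intro m
  induction m with
  | zero =>
    intro X _ _ h
    refine ⟨X, inferInstance, inferInstance, LinearMap.id, h, Function.surjective_id, ?_⟩
    have : Subsingleton (LinearMap.ker (LinearMap.id : X →ₗ[Γ] X)) := by
      constructor; rintro ⟨a, ha⟩ ⟨b, hb⟩
      simp only [LinearMap.mem_ker, LinearMap.id_apply] at ha hb
      simp [ha, hb]
    exact ⟨⟨0, fun x => Subsingleton.elim _ _⟩⟩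
  | succ m ih =>
    intro X _ _ h
    obtain ⟨P, _, _, p, hP, hp, hker⟩ := h
    exact ⟨P, inferInstance, inferInstance, p, hP, hp, ih _ hker⟩

lemma projDimLE_add (a t : ℕ) (X : Type) [AddCommGroup X] [Module Γ X]
    (h : ProjDimLE Γ a X) : ProjDimLE Γ (a+t) X := by
  induction t with
  | zero => exact h
  | succ t ih =>
    have := projDimLE_succ Γ (a+t) X ih
    rwa [show a+t+1 = a+(t+1) by omega] at this

lemma projDimLE_mono {a b : ℕ} (hab : a ≤ b) (X : Type) [AddCommGroup X] [Module Γ X]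
    (h : ProjDimLE Γ a X) : ProjDimLE Γ b X := by
  obtain ⟨t, rfl⟩ := Nat.exists_eq_add_of_le hab
  exact projDimLE_add Γ a t X h

end Gorenstein

/-- Let Γ be a finite-dimensional n-Gorenstein algebra. Then every finitely generated
Γ-module is either of infinite projective dimension or of projective dimension at
most n. -/
theorem stmt_2 (k : Type) [Field k] (Γ : Type) [Ring Γ] [Algebra k Γ]
    [FiniteDimensional k Γ] (n : ℕ) (hn : 1 ≤ n)
    (hGor₁ : ∀ (N : Type) [AddCommGroup N] [Module Γ N],
      Module.Injective Γ N → ProjDimLE Γ n N)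
    (hGor₂ : ∀ (N : Type) [AddCommGroup N] [Module Γ N],
      Module.Projective Γ N → InjDimLE Γ n N)
    (M : Type) [AddCommGroup M] [Module Γ M] [Module.Finite Γ M] :
    (¬ ∃ m : ℕ, ProjDimLE Γ m M) ∨ ProjDimLE Γ n M := by
  by_cases hfin : ∃ m : ℕ, ProjDimLE Γ m M
  · right
    obtain ⟨m, hm⟩ := hfin
    rcases le_or_gt m n with h | h
    · exact projDimLE_mono Γ h M hm
    · have hm' : ProjDimLE Γ (n + (m - n)) M := by rwa [show n + (m - n) = m by omega]
      exact reduce_to Γ n hGor₂ (m - n) M hm'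
  · exact Or.inl hfin
end

section
/- Let C be a triangulated category with shift functor Σ and X a cluster tilting object of C. Then for every object C' of C there exists a triangle X₁ → X₀ → C' → ΣX₁ with X₀, X₁ in add X. -/
/-!
Complete a right `add X`-approximation `g : X₀ ⟶ C'` to a triangle `X₀ ⟶ C' ⟶ Y ⟶ ΣX₀`.
A map from an object of `add X` to `Y` lifts along `C' ⟶ Y` because `Hom(add X, ΣX₀) = 0`,
and the lift factors through `g`, so the map is zero. Hence `Hom(add X, Σ(Σ⁻¹Y)) = 0`, i.e.
`X₁ := Σ⁻¹Y` lies in `add X`, and rotating the triangle gives `X₁ ⟶ X₀ ⟶ C' ⟶ ΣX₁`.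
-/

open CategoryTheory CategoryTheory.Limits CategoryTheory.Pretriangulated

/-- `Y` belongs to `add X`: it is a direct summand of a finite direct sum of copies
of `X`. -/
def InAdd {C : Type} [Category C] [Preadditive C] [HasFiniteBiproducts C]
    (X Y : C) : Prop :=
  ∃ (m : ℕ) (i : Y ⟶ ⨁ fun _ : Fin m => X) (r : (⨁ fun _ : Fin m => X) ⟶ Y),
    i ≫ r = 𝟙 Y

/-- `add X` is contravariantly finite: every object has a right `add X`-approximation. -/
def ContravariantlyFiniteAdd {C : Type} [Category C] [Preadditive C]
    [HasFiniteBiproducts C] (X : C) : Prop :=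
  ∀ M : C, ∃ (X' : C) (_ : InAdd X X') (f : X' ⟶ M),
    ∀ (X'' : C), InAdd X X'' → ∀ g : X'' ⟶ M, ∃ h : X'' ⟶ X', h ≫ f = g

/-- `add X` is covariantly finite: every object has a left `add X`-approximation. -/
def CovariantlyFiniteAdd {C : Type} [Category C] [Preadditive C]
    [HasFiniteBiproducts C] (X : C) : Prop :=
  ∀ M : C, ∃ (X' : C) (_ : InAdd X X') (f : M ⟶ X'),
    ∀ (X'' : C), InAdd X X'' → ∀ g : M ⟶ X'', ∃ h : X' ⟶ X'', f ≫ h = g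

/-- `X` is a cluster tilting object of the triangulated category `C`. -/
structure IsClusterTilting {C : Type} [Category C] [Preadditive C] [HasZeroObject C]
    [HasShift C ℤ] [∀ n : ℤ, (shiftFunctor C n).Additive] [Pretriangulated C]
    [HasFiniteBiproducts C] (X : C) : Prop where
  contravariantlyFinite : ContravariantlyFiniteAdd X
  covariantlyFinite : CovariantlyFiniteAdd X
  mem_iff_hom_shift_vanish :
    ∀ Y : C, InAdd X Y ↔ ∀ (Z : C), InAdd X Z → ∀ f : Y ⟶ Z⟦(1 : ℤ)⟧, f = 0
  mem_iff_vanish_hom_shift :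
    ∀ Y : C, InAdd X Y ↔ ∀ (Z : C), InAdd X Z → ∀ f : Z ⟶ Y⟦(1 : ℤ)⟧, f = 0

lemma Triangle.eq_zero_of_to_obj₃ {C : Type*} [Category C] [Preadditive C] [HasZeroObject C]
    [HasShift C ℤ] [∀ n : ℤ, (shiftFunctor C n).Additive] [Pretriangulated C]
    (T : Triangle C) (hT : T ∈ distTriang C) {W : C}
    (hfac : ∀ v : W ⟶ T.obj₂, ∃ w : W ⟶ T.obj₁, w ≫ T.mor₁ = v)
    (hvan : ∀ u : W ⟶ T.obj₁⟦(1 : ℤ)⟧, u = 0) (u : W ⟶ T.obj₃) : u = 0 := by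
  obtain ⟨v, rfl⟩ := Triangle.coyoneda_exact₃ T hT u (hvan _)
  obtain ⟨w, rfl⟩ := hfac v
  rw [Category.assoc, comp_distTriang_mor_zero₁₂ T hT, comp_zero]

lemma IsClusterTilting.inAdd_shift_neg_one_iff {C : Type} [Category C] [Preadditive C]
    [HasZeroObject C] [HasShift C ℤ] [∀ n : ℤ, (shiftFunctor C n).Additive]
    [Pretriangulated C] [HasFiniteBiproducts C] {X : C} (hX : IsClusterTilting X) (Y : C) :
    InAdd X (Y⟦(-1 : ℤ)⟧) ↔ ∀ Z, InAdd X Z → ∀ f : Z ⟶ Y, f = 0 := by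
  rw [hX.mem_iff_vanish_hom_shift]
  let e : Y⟦(-1 : ℤ)⟧⟦(1 : ℤ)⟧ ≅ Y := shiftNegShift Y (1 : ℤ)
  refine forall_congr' fun Z => forall_congr' fun _ => ⟨fun h f => ?_, fun h f => ?_⟩
  · simpa using h (f ≫ e.inv) =≫ e.hom
  · simpa using h (f ≫ e.hom) =≫ e.inv

/-- Let C be a triangulated category with shift functor Σ and X a cluster tilting
object of C. Then for every object C' of C there exists a triangle
X₁ → X₀ → C' → ΣX₁ with X₀, X₁ in add X. -/
theorem stmt_4 {C : Type} [Category C] [Preadditive C] [HasZeroObject C]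
    [HasShift C ℤ] [∀ n : ℤ, (shiftFunctor C n).Additive] [Pretriangulated C]
    [HasFiniteBiproducts C] (X : C) (hX : IsClusterTilting X) (C' : C) :
    ∃ (X₁ X₀ : C) (_ : InAdd X X₁) (_ : InAdd X X₀)
      (f : X₁ ⟶ X₀) (g : X₀ ⟶ C') (h : C' ⟶ X₁⟦(1 : ℤ)⟧),
      Triangle.mk f g h ∈ distTriang C := by
  obtain ⟨X₀, hX₀, g, hg⟩ := hX.contravariantlyFinite C'
  obtain ⟨Y, h, k, hT⟩ := distinguished_cocone_triangle g
  have hX₁ : InAdd X (Y⟦(-1 : ℤ)⟧) :=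
    (hX.inAdd_shift_neg_one_iff Y).2 fun W hW =>
      Triangle.eq_zero_of_to_obj₃ _ hT (hg W hW) ((hX.mem_iff_hom_shift_vanish W).1 hW X₀ hX₀)
  exact ⟨_, X₀, hX₁, hX₀, _, _, _, inv_rot_of_distTriang _ hT⟩
end

section
/- Let C be an (n+2)-angulated category with Oppermann–Thomas cluster tilting object X, and let X₀ → X₁ → ⋯ → Xₙ → M →^β ΣⁿX₀ be an (n+2)-angle with all Xᵢ ∈ add X. If the map Hom(X, Σ⁻ⁿM) → Hom(X, X₀) induced by (−1)ⁿΣ⁻ⁿβ is non-zero, then the factorization ideal I_M of End(ΣⁿX) is non-zero. -/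
open CategoryTheory CategoryTheory.Limits

/-- `M` is indecomposable: non-zero, and its only idempotent endomorphisms are `0`
and `𝟙 M`. -/
def Indec {C : Type} [Category C] [Preadditive C] (M : C) : Prop :=
  ¬ IsZero M ∧ ∀ e : M ⟶ M, e ≫ e = e → e = 0 ∨ e = 𝟙 M

/-- An `(n+2)`-`Σⁿ`-sequence `A₀ → A₁ → ⋯ → A_{n+1} → Σⁿ A₀` in `C`, where
`S = Σⁿ` is the `n`-suspension functor. -/
structure NAngle {C : Type} [Category C] (S : C ⥤ C) (n : ℕ) where
  obj : Fin (n + 2) → C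
  map : ∀ i : Fin (n + 1), obj i.castSucc ⟶ obj i.succ
  mapLast : obj (Fin.last (n + 1)) ⟶ S.obj (obj ⟨0, by omega⟩)

/-- A morphism of `(n+2)`-`Σⁿ`-sequences. -/
structure NAngleHom {C : Type} [Category C] {S : C ⥤ C} {n : ℕ}
    (T T' : NAngle S n) where
  hom : ∀ i : Fin (n + 2), T.obj i ⟶ T'.obj i
  comm : ∀ i : Fin (n + 1), T.map i ≫ hom i.succ = hom i.castSucc ≫ T'.map i
  commLast : T.mapLast ≫ S.map (hom ⟨0, by omega⟩) = hom (Fin.last (n + 1)) ≫ T'.mapLast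

/-- `(C, Σⁿ, Θ)` is an `(n+2)`-angulated category (we record the axioms of
Geiss–Keller–Oppermann used here: consecutive morphisms of an `(n+2)`-angle
compose to zero, every morphism extends to an `(n+2)`-angle (N1), and morphisms of
`(n+2)`-angles can be completed from their first two components (N3)). -/
structure IsNAngulated {C : Type} [Category C] [Preadditive C] (S : C ⥤ C) (n : ℕ)
    (Θ : Set (NAngle S n)) : Prop where
  comp_zero : ∀ T ∈ Θ, ∀ i : Fin n, T.map i.castSucc ≫ T.map i.succ = 0
  comp_last_zero : ∀ T ∈ Θ, T.map (Fin.last n) ≫ T.mapLast = 0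
  extend : ∀ {A₀ A₁ : C} (f : A₀ ⟶ A₁), ∃ T ∈ Θ,
    ∃ (e₀ : A₀ ≅ T.obj ⟨0, by omega⟩) (e₁ : A₁ ≅ T.obj ⟨1, by omega⟩),
      e₀.hom ≫ T.map ⟨0, by omega⟩ = f ≫ e₁.hom
  complete : ∀ T ∈ Θ, ∀ T' ∈ Θ,
    ∀ (φ₀ : T.obj ⟨0, by omega⟩ ⟶ T'.obj ⟨0, by omega⟩)
      (φ₁ : T.obj ⟨1, by omega⟩ ⟶ T'.obj ⟨1, by omega⟩),
      T.map ⟨0, by omega⟩ ≫ φ₁ = φ₀ ≫ T'.map ⟨0, by omega⟩ →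
      ∃ φ : NAngleHom T T', φ.hom ⟨0, by omega⟩ = φ₀ ∧ φ.hom ⟨1, by omega⟩ = φ₁

/-- `X` is an Oppermann–Thomas cluster tilting object: `Hom(X, ΣⁿX) = 0` and every
object of `C` fits into an `(n+2)`-angle `X₀ → X₁ → ⋯ → Xₙ → C' → ΣⁿX₀` with all
`Xᵢ ∈ add X`. -/
structure IsOTClusterTilting {C : Type} [Category C] [Preadditive C]
    [HasFiniteBiproducts C] (S : C ⥤ C) (n : ℕ) (Θ : Set (NAngle S n))
    (X : C) : Prop where
  vanish : ∀ f : X ⟶ S.obj X, f = 0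
  resolve : ∀ M : C, ∃ T ∈ Θ, (∀ i : Fin (n + 1), InAdd X (T.obj i.castSucc)) ∧
    Nonempty (T.obj (Fin.last (n + 1)) ≅ M)

/-- The hom-group `X ⟶ M` as a right module over `Γ = End X`, i.e. a left module
over `(End X)ᵐᵒᵖ`, with action given by precomposition. -/
instance homModule {C : Type} [Category C] [Preadditive C] (X M : C) :
    Module (End X)ᵐᵒᵖ (X ⟶ M) where
  smul γ f := γ.unop ≫ f
  one_smul f := Category.id_comp f
  mul_smul γ δ f := by
    show (γ.unop ≫ δ.unop) ≫ f = γ.unop ≫ δ.unop ≫ f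
    simp
  smul_zero γ := by show γ.unop ≫ (0 : X ⟶ M) = 0; simp
  smul_add γ f g := by show γ.unop ≫ (f + g) = γ.unop ≫ f + γ.unop ≫ g; simp
  add_smul γ δ f := by
    show (MulOpposite.unop (γ + δ)) ≫ f = γ.unop ≫ f + δ.unop ≫ f; simp
  zero_smul f := by show MulOpposite.unop (0 : (End X)ᵐᵒᵖ) ≫ f = 0; simp

/-- The `(End X)ᵐᵒᵖ`-linear map `Hom(X, A) → Hom(X, B)` induced by postcomposition
with `φ : A ⟶ B`. -/
def homMap {C : Type} [Category C] [Preadditive C] (X : C) {A B : C} (φ : A ⟶ B) :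
    (X ⟶ A) →ₗ[(End X)ᵐᵒᵖ] (X ⟶ B) where
  toFun f := f ≫ φ
  map_add' f g := by simp
  map_smul' γ f := by
    show (γ.unop ≫ f) ≫ φ = γ.unop ≫ f ≫ φ
    simp

/-- The factorization ideal `I_M` of `End(ΣⁿX)`, consisting of the endomorphisms of
`ΣⁿX` factoring through `add M`, is non-zero. -/
def FactIdealNonzero {C : Type} [Category C] [Preadditive C] [HasFiniteBiproducts C]
    (S : C ⥤ C) (X M : C) : Prop :=
  ∃ (N : C) (_ : InAdd M N) (a : S.obj X ⟶ N) (b : N ⟶ S.obj X), a ≫ b ≠ 0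

/-
Write `h : X ⟶ X₀` for the non-zero composite of `g : X ⟶ Σ⁻ⁿM` with `Σ⁻ⁿβ`. Since `X₀` is a
retract of some `Xᵐ`, some projection `φ : X₀ ⟶ X` keeps `h ≫ φ` non-zero. Applying the
equivalence `Σⁿ`, the endomorphism `Σⁿ(h ≫ φ)` of `ΣⁿX` is non-zero and factors as
`ΣⁿX ⟶ M ⟶ ΣⁿX₀ ⟶ ΣⁿX`, i.e. through `M ∈ add M`.
-/

theorem InAdd.refl {C : Type} [Category C] [Preadditive C] [HasFiniteBiproducts C] (M : C) :
    InAdd M M :=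
  ⟨1, biproduct.lift fun _ => 𝟙 M, biproduct.π _ 0, by simp⟩

theorem InAdd.exists_comp_ne_zero {C : Type} [Category C] [Preadditive C]
    [HasFiniteBiproducts C] {X Y W : C} (hY : InAdd X Y) {f : W ⟶ Y} (hf : f ≠ 0) :
    ∃ φ : Y ⟶ X, f ≫ φ ≠ 0 := by
  obtain ⟨m, i, r, hir⟩ := hY
  by_contra! hπ
  have hfi : f ≫ i = 0 := biproduct.hom_ext _ _ fun k => by simpa using hπ (i ≫ biproduct.π _ k)
  exact hf (by rw [← Category.comp_id f, ← hir, ← Category.assoc, hfi, zero_comp])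

theorem CategoryTheory.Equivalence.functor_map_comp_inverse_map_comp_unitInv {C D : Type*}
    [Category C] [Category D] (e : C ≌ D) {X A : C} {M : D} (g : X ⟶ e.inverse.obj M)
    (β : M ⟶ e.functor.obj A) :
    e.functor.map (g ≫ e.inverse.map β ≫ e.unitInv.app A) =
      (e.functor.map g ≫ e.counit.app M) ≫ β := by
  have hβ := e.counit.naturality β
  simp only [Functor.comp_map, Functor.id_map] at hβ
  simp only [Functor.map_comp, Category.assoc, ← Equivalence.counit_app_functor, hβ]

/-- Let C be an (n+2)-angulated category with Oppermann–Thomas cluster tilting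
object X, and let X₀ → X₁ → ⋯ → Xₙ → M →^β ΣⁿX₀ be an (n+2)-angle with all
Xᵢ ∈ add X. If the map Hom(X, Σ⁻ⁿM) → Hom(X, X₀) induced by (−1)ⁿΣ⁻ⁿβ is non-zero,
then the factorization ideal I_M of End(ΣⁿX) is non-zero. Here M is the last
object of the angle T and β = T.mapLast. -/
theorem stmt_11 {C : Type} [Category C] [Preadditive C] [HasFiniteBiproducts C]
    (n : ℕ) (e : C ≌ C)
    (X : C)
    (T : NAngle e.functor n)
    (hadd : ∀ i : Fin (n + 1), InAdd X (T.obj i.castSucc))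
    (hne : ∃ g : X ⟶ e.inverse.obj (T.obj (Fin.last (n + 1))),
      ((-1 : ℤ) ^ n) •
        (g ≫ e.inverse.map T.mapLast ≫ e.unitIso.inv.app (T.obj ⟨0, by omega⟩)) ≠ 0) :
    FactIdealNonzero e.functor X (T.obj (Fin.last (n + 1))) := by
  obtain ⟨g, hg⟩ := hne
  have hX₀ : InAdd X (T.obj ⟨0, by omega⟩) := hadd 0
  obtain ⟨φ, hφ⟩ := hX₀.exists_comp_ne_zero (right_ne_zero_of_smul hg)
  refine ⟨_, InAdd.refl _, e.functor.map g ≫ e.counit.app _, T.mapLast ≫ e.functor.map φ, ?_⟩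
  rw [← Category.assoc, ← e.functor_map_comp_inverse_map_comp_unitInv, ← Functor.map_comp,
    Ne, Functor.map_eq_zero_iff]
  simpa only [Category.assoc] using hφ
end
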